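/- Let Γ be a nonempty finite subset of (ℤ_{≥0})ⁿ and α ∈ (ℝ_{≥0})ⁿ. Then the following are equivalent: (1) for every weight vector ν ∈ (ℝ_{>0})ⁿ, ν·α ≥ min_{γ∈Γ} ν·γ; (2) α ∈ conv(Γ) + (ℝ_{≥0})ⁿ, i.e. α lies in the Minkowski sum of the convex hull of Γ with the nonnegative orthant. -/

import Mathlib

/-!
A linear functional with positive weights attains its minimum over `conv(Γ)` at a point of `Γ`
and is nonnegative on the orthant, which gives one direction. Conversely, the Newton polyhedron
is closed and convex, so a point outside it is strictly separated from it by a linear functional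
`w`. Since the polyhedron is stable under adding the orthant, `w` is bounded below on rays in
coordinate directions, hence `w ≥ 0`; strict separation from the finitely many points of `Γ` is
an open condition, so `w` may be perturbed to a strictly positive weight vector.
-/

open Pointwise Filter Topology

variable {ι : Type*}

def newtonPolyhedron (S : Set (ι → ℝ)) : Set (ι → ℝ) :=
  convexHull ℝ S + Set.Ici 0

variable {S : Set (ι → ℝ)}

theorem convex_newtonPolyhedron (S : Set (ι → ℝ)) : Convex ℝ (newtonPolyhedron S) :=
  (convex_convexHull ℝ S).add (convex_Ici 0)

theorem Set.Finite.isClosed_newtonPolyhedron (hS : S.Finite) : IsClosed (newtonPolyhedron S) :=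
  isClosed_Ici.add_left_of_isCompact (hS.isCompact_convexHull (𝕜 := ℝ))

theorem add_mem_newtonPolyhedron {s v : ι → ℝ} (hs : s ∈ S) (hv : 0 ≤ v) :
    s + v ∈ newtonPolyhedron S :=
  Set.add_mem_add (subset_convexHull ℝ S hs) hv

theorem exists_dotProduct_le_of_mem_newtonPolyhedron [Fintype ι] {x ν : ι → ℝ}
    (hx : x ∈ newtonPolyhedron S) (hν : 0 ≤ ν) : ∃ s ∈ S, ν ⬝ᵥ s ≤ ν ⬝ᵥ x := by
  classical
  obtain ⟨p, hp, v, hv, rfl⟩ := hx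
  obtain ⟨s, hs, hsp⟩ := ((dotProductEquiv ℝ ι ν).concaveOn convex_univ).exists_le_of_mem_convexHull
    (Set.subset_univ S) hp
  refine ⟨s, hs, ?_⟩
  calc ν ⬝ᵥ s ≤ ν ⬝ᵥ p := hsp
    _ ≤ ν ⬝ᵥ p + ν ⬝ᵥ v := le_add_of_nonneg_right (dotProduct_nonneg_of_nonneg hν hv)
    _ = ν ⬝ᵥ (p + v) := (dotProduct_add ν p v).symm

theorem nonneg_of_forall_lt_add_mul {a b u : ℝ} (h : ∀ t : ℝ, 0 ≤ t → u < a + t * b) : 0 ≤ b := by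
  by_contra! hb
  have ht : 0 ≤ (a - u) / -b := div_nonneg (by linarith [h 0 le_rfl]) (by linarith)
  have hmul : (a - u) / -b * b = -(a - u) := by field_simp [hb.ne]
  linarith [h _ ht]

theorem nonneg_of_forall_mem_newtonPolyhedron_lt_dotProduct [Fintype ι] (hS : S.Nonempty)
    {w : ι → ℝ} {u : ℝ} (h : ∀ p ∈ newtonPolyhedron S, u < w ⬝ᵥ p) : 0 ≤ w := by
  classical
  obtain ⟨s, hs⟩ := hS
  intro i
  refine nonneg_of_forall_lt_add_mul (a := w ⬝ᵥ s) (u := u) fun t ht => ?_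
  have hv : (0 : ι → ℝ) ≤ t • Pi.single i 1 := smul_nonneg ht (Pi.single_nonneg.2 zero_le_one)
  simpa [dotProduct_add, dotProduct_smul, dotProduct_single, mul_comm] using
    h _ (add_mem_newtonPolyhedron hs hv)

theorem IsOpen.exists_pos_mem_of_nonneg {U : Set (ι → ℝ)} (hU : IsOpen U) {w : ι → ℝ}
    (hw : w ∈ U) (hw₀ : 0 ≤ w) : ∃ ν ∈ U, ∀ i, 0 < ν i := by
  have hcont : Continuous fun ε : ℝ => w + ε • (1 : ι → ℝ) := by fun_prop
  have hlim : Tendsto (fun ε : ℝ => w + ε • (1 : ι → ℝ)) (𝓝[>] 0) (𝓝 w) :=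
    (hcont.tendsto' 0 w (by simp)).mono_left nhdsWithin_le_nhds
  obtain ⟨ε, hεU, hε⟩ := ((hlim.eventually (hU.mem_nhds hw)).and self_mem_nhdsWithin).exists
  exact ⟨_, hεU, fun i => by simpa using add_pos_of_nonneg_of_pos (hw₀ i) hε⟩

theorem geometric_hahn_banach_point_closed_dotProduct [Fintype ι] {P : Set (ι → ℝ)}
    (hconv : Convex ℝ P) (hclosed : IsClosed P) {x : ι → ℝ} (hx : x ∉ P) :
    ∃ (w : ι → ℝ) (u : ℝ), w ⬝ᵥ x < u ∧ ∀ p ∈ P, u < w ⬝ᵥ p := by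
  classical
  obtain ⟨f, u, hfx, hfP⟩ := geometric_hahn_banach_point_closed hconv hclosed hx
  have hf : ∀ y, (dotProductEquiv ℝ ι).symm f.toLinearMap ⬝ᵥ y = f y := fun y =>
    LinearMap.congr_fun ((dotProductEquiv ℝ ι).apply_symm_apply f.toLinearMap) y
  exact ⟨_, u, by rwa [hf], fun p hp => by rw [hf]; exact hfP p hp⟩

theorem exists_pos_dotProduct_lt_of_notMem_newtonPolyhedron [Fintype ι] (hS : S.Finite)
    {x : ι → ℝ} (hx : x ∉ newtonPolyhedron S) :
    ∃ ν : ι → ℝ, (∀ i, 0 < ν i) ∧ ∀ s ∈ S, ν ⬝ᵥ x < ν ⬝ᵥ s := by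
  rcases S.eq_empty_or_nonempty with rfl | hSne
  · exact ⟨1, fun _ => one_pos, by simp⟩
  obtain ⟨w, u, hwx, hwP⟩ := geometric_hahn_banach_point_closed_dotProduct
    (convex_newtonPolyhedron S) hS.isClosed_newtonPolyhedron hx
  have hopen : IsOpen {ν : ι → ℝ | ∀ s ∈ S, ν ⬝ᵥ x < ν ⬝ᵥ s} := by
    simp only [Set.ofPred_forall]
    exact hS.isOpen_biInter fun s _ =>
      isOpen_lt (continuous_id.dotProduct continuous_const)
        (continuous_id.dotProduct continuous_const)
  have hw : ∀ s ∈ S, w ⬝ᵥ x < w ⬝ᵥ s := fun s hs =>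
    hwx.trans (hwP s (by simpa using add_mem_newtonPolyhedron hs le_rfl))
  obtain ⟨ν, hν, hpos⟩ := hopen.exists_pos_mem_of_nonneg hw
    (nonneg_of_forall_mem_newtonPolyhedron_lt_dotProduct hSne hwP)
  exact ⟨ν, hpos, hν⟩

theorem not_below_diagram_iff_mem_newton_polyhedron_general {n : ℕ}
    (Γ : Finset (Fin n → ℕ)) (α : Fin n → ℝ) :
    (∀ ν : Fin n → ℝ, (∀ i, 0 < ν i) →
        ∃ γ ∈ Γ, ∑ i, ν i * (γ i : ℝ) ≤ ∑ i, ν i * α i) ↔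
      α ∈ convexHull ℝ ((fun γ : Fin n → ℕ => fun i => (γ i : ℝ)) '' (Γ : Set (Fin n → ℕ)))
            + {x : Fin n → ℝ | ∀ i, 0 ≤ x i} := by
  change _ ↔ α ∈ newtonPolyhedron _
  constructor
  · intro hbelow
    by_contra hα
    obtain ⟨ν, hν, hlt⟩ :=
      exists_pos_dotProduct_lt_of_notMem_newtonPolyhedron (Γ.finite_toSet.image _) hα
    obtain ⟨γ, hγ, hle⟩ := hbelow ν hν
    exact hle.not_gt (hlt _ ⟨γ, hγ, rfl⟩)
  · intro hα ν hν
    obtain ⟨_, ⟨γ, hγ, rfl⟩, hle⟩ :=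
      exists_dotProduct_le_of_mem_newtonPolyhedron hα fun i => (hν i).le
    exact ⟨γ, hγ, hle⟩

/-- For a nonempty finite set `Γ ⊆ (ℤ_{≥0})ⁿ` and `α ∈ (ℝ_{≥0})ⁿ`, the point `α` is not
below the Newton diagram of `Γ` (i.e. `ν·α ≥ min_{γ∈Γ} ν·γ` for every positive weight `ν`)
if and only if `α` lies in the Newton polyhedron `conv(Γ) + (ℝ_{≥0})ⁿ`. -/
theorem not_below_diagram_iff_mem_newton_polyhedron {n : ℕ}
    (Γ : Finset (Fin n → ℕ)) (hΓ : Γ.Nonempty) (α : Fin n → ℝ) (hα : ∀ i, 0 ≤ α i) :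
    (∀ ν : Fin n → ℝ, (∀ i, 0 < ν i) →
        ∃ γ ∈ Γ, ∑ i, ν i * (γ i : ℝ) ≤ ∑ i, ν i * α i) ↔
      α ∈ convexHull ℝ ((fun γ : Fin n → ℕ => fun i => (γ i : ℝ)) '' (Γ : Set (Fin n → ℕ)))
            + {x : Fin n → ℝ | ∀ i, 0 ≤ x i} :=
  not_below_diagram_iff_mem_newton_polyhedron_general Γ α
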